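/- Assume {W_ε} is L-admissible. Fix s ∈ {1,…,S} and let λ̂ ∈ ℂ be an eigenvalue of P̂_{k,β,L} possessing an eigenvector belonging to V_s. Then e^{2πikβ_s}·λ̂ is a nonpositive real number; in particular, if λ̂ ≠ 0 then λ̂ = −|λ̂|·e^{−2πikβ_s}, i.e. the complex argument of λ̂ equals −2πkβ_s + π modulo 2π. -/

import Mathlib

noncomputable section
open Complex Filter Topology MeasureTheory

/-- `eC k b = exp(-2πi k b)`. -/
def eC (k : ℤ) (b : ℝ) : ℂ := Complex.exp (-2 * (Real.pi : ℂ) * Complex.I * (k : ℂ) * (b : ℂ))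

variable {N S : ℕ}

/-- Hermitian inner product `⟨v,w⟩ = ∑_j v j * conj (w j)` on `ℂ^N`. -/
def inn (v w : Fin N → ℂ) : ℂ := ∑ j, v j * (starRingEnd ℂ) (w j)

/-- Euclidean norm on `ℂ^N`. -/
def nrm (v : Fin N → ℂ) : ℝ := Real.sqrt (∑ j, Complex.normSq (v j))

/-- `W_ε = I + ε Ẇ` (complexified). -/
def Weps (Wd : Matrix (Fin N) (Fin N) ℝ) (ε : ℝ) : Matrix (Fin N) (Fin N) ℂ :=
  1 + (ε : ℂ) • (Wd.map Complex.ofReal)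

/-- The diagonal matrix `D_{k,α}` with entries `exp(-2πik α_j)`. -/
def DmatA (k : ℤ) (α : Fin N → ℝ) : Matrix (Fin N) (Fin N) ℂ :=
  Matrix.diagonal fun j => eC k (α j)

/-- Partial sums of the band-width vector: `Nsum L s = L 0 + ⋯ + L (s-1)`. -/
def Nsum (L : Fin S → ℕ) (s : ℕ) : ℕ := ∑ i : Fin S, if (i : ℕ) < s then L i else 0

/-- `j` belongs to the `s`-th band `B_s` (with `j` 0-indexed). -/
def inBand (L : Fin S → ℕ) (s : Fin S) (j : Fin N) : Prop :=
  Nsum L (s : ℕ) ≤ (j : ℕ) ∧ (j : ℕ) < Nsum L ((s : ℕ) + 1)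

/-- `D_{k,β,L}`: block-diagonal with `s`-th block `exp(-2πik β_s)·Id`, expressed
via the band-index function `bI` (where `bI j` is the band of `j`). -/
def Dmat (k : ℤ) (β : Fin S → ℝ) (bI : Fin N → Fin S) : Matrix (Fin N) (Fin N) ℂ :=
  Matrix.diagonal fun j => eC k (β (bI j))

/-- `P_{ε,β} = D_{k,β,L} W_ε`. -/
def Pmat (k : ℤ) (β : Fin S → ℝ) (bI : Fin N → Fin S) (Wd : Matrix (Fin N) (Fin N) ℝ)
    (ε : ℝ) : Matrix (Fin N) (Fin N) ℂ := Dmat k β bI * Weps Wd ε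

/-- `Ŵ_L`: the block-diagonal part of `Ẇ` (blocks `Ŵ_1, …, Ŵ_S`). -/
def WhatL (Wd : Matrix (Fin N) (Fin N) ℝ) (bI : Fin N → Fin S) : Matrix (Fin N) (Fin N) ℝ :=
  Matrix.of fun j l => if bI j = bI l then Wd j l else 0

/-- `P̂_{k,β,L} = D_{k,β,L} Ŵ_L`. -/
def Phat (k : ℤ) (β : Fin S → ℝ) (bI : Fin N → Fin S) (Wd : Matrix (Fin N) (Fin N) ℝ) :
    Matrix (Fin N) (Fin N) ℂ := Dmat k β bI * (WhatL Wd bI).map Complex.ofReal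

/-- `L`-admissibility of the family `W_ε = I + εẆ`. -/
def LAdmissible (L : Fin S → ℕ) (Wd : Matrix (Fin N) (Fin N) ℝ) (bI : Fin N → Fin S) : Prop :=
  Wd.IsSymm ∧ (∀ i j, i ≠ j → 0 ≤ Wd i j) ∧ (∀ i, ∑ j, Wd i j = 0) ∧
  (∃ μ : Fin N → ℝ, Function.Injective μ ∧ ∃ v : Fin N → Fin N → ℝ,
    (∀ i, v i ≠ 0) ∧ ∀ i, Wd.mulVec (v i) = μ i • v i) ∧
  (∀ s : Fin S, ∃ μ : Fin (L s) → ℝ, Function.Injective μ ∧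
    ∃ v : Fin (L s) → Fin N → ℝ, (∀ i, v i ≠ 0) ∧ (∀ i j, bI j ≠ s → v i j = 0) ∧
      ∀ i, (WhatL Wd bI).mulVec (v i) = μ i • v i)

/-- `β ∈ Γ`: for every nonzero integer `k'`, the exponentials `exp(-2πik' β_s)`
of distinct bands never coincide. -/
def Gamma (β : Fin S → ℝ) : Prop :=
  ∀ k' : ℤ, k' ≠ 0 → ∀ s1 s2 : Fin S, s1 ≠ s2 → eC k' (β s1) ≠ eC k' (β s2)

/-- Orthogonal projection `π_s` of `ℂ^N` onto `V_s`. -/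
def projBand (bI : Fin N → Fin S) (s : Fin S) (v : Fin N → ℂ) : Fin N → ℂ :=
  fun j => if bI j = s then v j else 0

/-- `min_{θ∈[0,2π)} ‖v − e^{iθ} w‖`. -/
def phaseDist (v w : Fin N → ℂ) : ℝ :=
  sInf ((fun θ : ℝ => nrm (v - Complex.exp (θ * Complex.I) • w)) '' Set.Ico 0 (2 * Real.pi))

/-- `dist_{ℂP}(v,w) = min_{θ∈[0,2π)} ‖v/‖v‖ − e^{iθ}·w/‖w‖‖`. -/
def cpDist (v w : Fin N → ℂ) : ℝ :=
  sInf ((fun θ : ℝ =>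
    nrm ((nrm v)⁻¹ • v - Complex.exp (θ * Complex.I) • ((nrm w)⁻¹ • w))) '' Set.Ico 0 (2 * Real.pi))

/-!
On vectors supported in the band `B_s` the diagonal factor `D_{k,β,L}` acts as the scalar
`e^{-2πikβ_s}`, because `Ŵ_L` maps such vectors to vectors supported in `B_s` again. Hence
`e^{2πikβ_s} λ̂` is an eigenvalue of `Ŵ_L`. This real matrix is symmetric, so its eigenvalues are
real, and it has nonnegative off-diagonal entries and nonpositive row sums (`Ŵ_L` only drops
nonnegative off-diagonal entries of `Ẇ`), so Gershgorin's circle theorem puts every eigenvalue in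
the closed left half-plane.
-/

open Matrix

namespace Matrix

variable {n : Type*} [Fintype n]

open scoped ComplexOrder in
theorem IsHermitian.im_eq_zero_of_mulVec_eq_smul {A : Matrix n n ℂ} (hA : A.IsHermitian)
    {μ : ℂ} {v : n → ℂ} (hv : v ≠ 0) (h : A *ᵥ v = μ • v) : μ.im = 0 := by
  have him := hA.im_star_dotProduct_mulVec_self v
  rw [h, dotProduct_smul, smul_eq_mul] at him
  obtain ⟨hre_pos, him_zero⟩ :=
    Complex.pos_iff.mp (dotProduct_star_self_pos_iff.mpr hv)
  have : μ.im * (star v ⬝ᵥ v).re = 0 := by simpa [← him_zero] using him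
  exact (mul_eq_zero.mp this).resolve_right hre_pos.ne'

variable [DecidableEq n]

theorem re_nonpos_of_hasEigenvalue_of_sum_row_nonpos {A : Matrix n n ℝ}
    (hoff : ∀ i j, i ≠ j → 0 ≤ A i j) (hrow : ∀ i, ∑ j, A i j ≤ 0) {μ : ℂ}
    (hμ : Module.End.HasEigenvalue (toLin' (A.map ((↑) : ℝ → ℂ))) μ) : μ.re ≤ 0 := by
  obtain ⟨i, hi⟩ := eigenvalue_mem_ball hμ
  rw [Metric.mem_closedBall, dist_eq_norm] at hi
  have hradius : ∑ j ∈ Finset.univ.erase i, ‖(A.map ((↑) : ℝ → ℂ)) i j‖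
      = ∑ j ∈ Finset.univ.erase i, A i j :=
    Finset.sum_congr rfl fun j hj => by
      rw [map_apply, Complex.norm_real, Real.norm_of_nonneg
        (hoff i j (Finset.ne_of_mem_erase hj).symm)]
  have hsplit := Finset.sum_erase_add Finset.univ (A i ·) (Finset.mem_univ i)
  have hre : μ.re - A i i ≤ ‖μ - (A.map ((↑) : ℝ → ℂ)) i i‖ := by
    simpa using Complex.re_le_norm (μ - A i i)
  linarith [hrow i]

theorem exists_nonpos_eq_of_mulVec_eq_smul {A : Matrix n n ℝ} (hA : A.IsSymm)
    (hoff : ∀ i j, i ≠ j → 0 ≤ A i j) (hrow : ∀ i, ∑ j, A i j ≤ 0) {μ : ℂ} {v : n → ℂ}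
    (hv : v ≠ 0) (h : A.map ((↑) : ℝ → ℂ) *ᵥ v = μ • v) : ∃ r : ℝ, r ≤ 0 ∧ μ = r := by
  have hherm : (A.map ((↑) : ℝ → ℂ)).IsHermitian :=
    (isHermitian_iff_isSymm.mpr hA).map _ fun x => (Complex.conj_ofReal x).symm
  have hμ : Module.End.HasEigenvalue (toLin' (A.map ((↑) : ℝ → ℂ))) μ :=
    Module.End.hasEigenvalue_of_hasEigenvector
      ⟨Module.End.mem_eigenspace_iff.mpr (by rwa [toLin'_apply]), hv⟩
  exact ⟨μ.re, re_nonpos_of_hasEigenvalue_of_sum_row_nonpos hoff hrow hμ,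
    Complex.ext rfl (by simpa using hherm.im_eq_zero_of_mulVec_eq_smul hv h)⟩

end Matrix

lemma eC_neg_mul_eC (k : ℤ) (b : ℝ) : eC (-k) b * eC k b = 1 := by
  rw [eC, eC, ← Complex.exp_add, ← Complex.exp_zero]
  congr 1
  push_cast
  ring

lemma norm_eC (k : ℤ) (b : ℝ) : ‖eC k b‖ = 1 := by
  rw [eC, show -2 * (Real.pi : ℂ) * Complex.I * (k : ℂ) * (b : ℂ)
      = ((-2 * Real.pi * k * b : ℝ) : ℂ) * Complex.I by push_cast; ring,
    Complex.norm_exp_ofReal_mul_I]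

lemma Nsum_mono (L : Fin S → ℕ) : Monotone (Nsum L) := fun _ _ hab =>
  Finset.sum_le_sum fun i _ => by split_ifs <;> omega

lemma inBand_unique {L : Fin S → ℕ} {s t : Fin S} {j : Fin N}
    (hs : inBand L s j) (ht : inBand L t j) : s = t := by
  have hle : ∀ {s t : Fin S}, inBand L s j → inBand L t j → s ≤ t := fun hs ht => by
    by_contra! hlt
    have := Nsum_mono L (show (_ : ℕ) + 1 ≤ _ from hlt)
    have := hs.1
    have := ht.2
    omega
  exact le_antisymm (hle hs ht) (hle ht hs)

section WhatL

variable {Wd : Matrix (Fin N) (Fin N) ℝ} {bI : Fin N → Fin S}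

lemma WhatL_isSymm (hWd : Wd.IsSymm) : (WhatL Wd bI).IsSymm :=
  IsSymm.ext fun i j => by
    simp only [WhatL, of_apply, eq_comm (a := bI i), hWd.apply]

lemma WhatL_nonneg_of_ne (hoff : ∀ i j, i ≠ j → 0 ≤ Wd i j) {i j : Fin N} (hij : i ≠ j) :
    0 ≤ WhatL Wd bI i j := by
  simp only [WhatL, of_apply]
  split_ifs
  exacts [hoff i j hij, le_rfl]

lemma sum_WhatL_le (hoff : ∀ i j, i ≠ j → 0 ≤ Wd i j) (i : Fin N) :
    ∑ j, WhatL Wd bI i j ≤ ∑ j, Wd i j :=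
  Finset.sum_le_sum fun j _ => by
    simp only [WhatL, of_apply]
    split_ifs with h
    exacts [le_rfl, hoff i j fun hij => h (hij ▸ rfl)]

lemma WhatL_mulVec_apply_eq_zero {s : Fin S} {v : Fin N → ℂ} (hv : ∀ l, bI l ≠ s → v l = 0)
    {j : Fin N} (hj : bI j ≠ s) : ((WhatL Wd bI).map ((↑) : ℝ → ℂ) *ᵥ v) j = 0 := by
  refine Fintype.sum_eq_zero (fun l => (WhatL Wd bI).map ((↑) : ℝ → ℂ) j l * v l) fun l => ?_
  by_cases hl : bI l = s
  · simp [WhatL, hl, hj]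
  · simp [hv l hl]

lemma Phat_mulVec_of_band {k : ℤ} {β : Fin S → ℝ} {s : Fin S} {v : Fin N → ℂ}
    (hv : ∀ l, bI l ≠ s → v l = 0) :
    Phat k β bI Wd *ᵥ v = eC k (β s) • ((WhatL Wd bI).map ((↑) : ℝ → ℂ) *ᵥ v) := by
  funext j
  rw [Phat, ← mulVec_mulVec, Dmat, mulVec_diagonal, Pi.smul_apply, smul_eq_mul]
  by_cases hj : bI j = s
  · rw [hj]
  · rw [WhatL_mulVec_apply_eq_zero hv hj, mul_zero, mul_zero]

end WhatL

theorem stmt9_general (N S : ℕ) (k : ℤ)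
    (β : Fin S → ℝ)
    (L : Fin S → ℕ)
    (bI : Fin N → Fin S) (hbI : ∀ j, inBand L (bI j) j)
    (Wd : Matrix (Fin N) (Fin N) ℝ) (hadm : LAdmissible L Wd bI)
    (s : Fin S) (lamh : ℂ) (v : Fin N → ℂ) (hv0 : v ≠ 0)
    (hvV : ∀ j, ¬ inBand L s j → v j = 0)
    (heig : (Phat k β bI Wd).mulVec v = lamh • v) :
    (∃ r : ℝ, r ≤ 0 ∧ eC (-k) (β s) * lamh = (r : ℂ)) ∧
    (lamh ≠ 0 → lamh = -((‖lamh‖ : ℝ) : ℂ) * eC k (β s)) := by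
  obtain ⟨hsymm, hoff, hrow, -, -⟩ := hadm
  have hband : ∀ j, bI j ≠ s → v j = 0 := fun j hj =>
    hvV j fun hs => hj (inBand_unique (hbI j) hs)
  have hW : (WhatL Wd bI).map ((↑) : ℝ → ℂ) *ᵥ v = (eC (-k) (β s) * lamh) • v := by
    rw [mul_smul, ← heig, Phat_mulVec_of_band hband, smul_smul, eC_neg_mul_eC, one_smul]
  obtain ⟨r, hr, hμ⟩ := exists_nonpos_eq_of_mulVec_eq_smul (WhatL_isSymm hsymm)
    (fun _ _ => WhatL_nonneg_of_ne hoff) (fun i => (sum_WhatL_le hoff i).trans (hrow i).le)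
    hv0 hW
  have hlam : lamh = r * eC k (β s) := by
    rw [← hμ, mul_comm, ← mul_assoc, mul_comm (eC k _), eC_neg_mul_eC, one_mul]
  refine ⟨⟨r, hr, hμ⟩, fun _ => ?_⟩
  rw [hlam, norm_mul, norm_eC, mul_one, Complex.norm_real, Real.norm_of_nonpos hr]
  push_cast
  ring

/-- an eigenvalue `λ̂` of `P̂_{k,β,L}` with an eigenvector in `V_s`
satisfies: `exp(2πikβ_s)·λ̂` is a nonpositive real; if moreover `λ̂ ≠ 0` then
`λ̂ = −|λ̂|·exp(−2πikβ_s)`. -/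
theorem stmt9 (N S : ℕ) (hN : 1 ≤ N) (hS1 : 1 ≤ S) (hSN : S ≤ N) (k : ℤ)
    (β : Fin S → ℝ) (hβ : Function.Injective β)
    (L : Fin S → ℕ) (hL : ∀ s, 0 < L s) (hsum : ∑ s, L s = N)
    (bI : Fin N → Fin S) (hbI : ∀ j, inBand L (bI j) j)
    (Wd : Matrix (Fin N) (Fin N) ℝ) (hadm : LAdmissible L Wd bI)
    (s : Fin S) (lamh : ℂ) (v : Fin N → ℂ) (hv0 : v ≠ 0)
    (hvV : ∀ j, ¬ inBand L s j → v j = 0)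
    (heig : (Phat k β bI Wd).mulVec v = lamh • v) :
    (∃ r : ℝ, r ≤ 0 ∧ eC (-k) (β s) * lamh = (r : ℂ)) ∧
    (lamh ≠ 0 → lamh = -((‖lamh‖ : ℝ) : ℂ) * eC k (β s)) :=
  stmt9_general N S k β L bI hbI Wd hadm s lamh v hv0 hvV heig
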